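/- For every N ≥ 2 and every integer m ≥ 1, the generic stretching factor of φ_{N,m} satisfies λ_A(φ_{N,m}) ≤ 1 + m/N, i.e., limsup_{n→∞} avg_n(φ_{N,m}) ≤ (N+m)/N. -/

import Mathlib

/-- The reduced word length of an element of the free group on `Fin N`. -/
noncomputable def wlen {N : ℕ} (w : FreeGroup (Fin N)) : ℕ := w.toWord.length

/-- The cyclically reduced length of `w`: the minimal word length among all conjugates. -/
noncomputable def cyclen {N : ℕ} (w : FreeGroup (Fin N)) : ℕ :=
  sInf (Set.range fun g : FreeGroup (Fin N) => wlen (g * w * g⁻¹))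

/-- The average of `‖φ w‖_A` over the sphere of radius `n`, divided by `n`. -/
noncomputable def avg (N : ℕ) (φ : FreeGroup (Fin N) → FreeGroup (Fin N)) (n : ℕ) : ℝ :=
  (∑' w : {w : FreeGroup (Fin N) // wlen w = n}, (cyclen (φ w.1) : ℝ)) /
    ((n : ℝ) * ((2 * N * (2 * N - 1) ^ (n - 1) : ℕ) : ℝ))

/-!
For any endomorphism `φ` of `F_N`, `‖φ w‖ ≤ |φ w| ≤ ∑ᵢ cᵢ(w) |φ aᵢ|`, where `cᵢ(w)` counts the
letters `aᵢ^±1` of `w`.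
Permuting the generators permutes the sphere of radius `n`, so on average each generator accounts
for `n / N` letters of a word of length `n`; hence `avg_n(φ) ≤ (∑ᵢ |φ aᵢ|) / N` for every `n`, the
sphere having at most `2N(2N-1)^(n-1)` elements. For `φ_{N,m}` the images of the generators have
total length `N + m`.
-/

open Filter Function

namespace FreeGroup

variable {α β : Type*}

lemma norm_mk_le_sum_norm_of [DecidableEq β] (φ : FreeGroup α →* FreeGroup β)
    (L : List (α × Bool)) : (φ (mk L)).norm ≤ (L.map fun x => (φ (of x.1)).norm).sum := by
  induction L with
  | nil => simp [← one_eq_mk]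
  | cons x L ih =>
    have hx : (φ (mk [x])).norm = (φ (of x.1)).norm := by
      obtain ⟨i, _ | _⟩ := x
      · rw [show mk [(i, false)] = (of i)⁻¹ by simp [of, inv_mk, invRev], _root_.map_inv,
          norm_inv_eq]
      · rfl
    rw [← List.singleton_append, ← mul_mk, _root_.map_mul, List.map_append, List.sum_append]
    exact (norm_mul_le _ _).trans (by simpa [hx] using ih)

lemma IsReduced.map {f : α → β} (hf : Injective f) {L : List (α × Bool)} (h : IsReduced L) :
    IsReduced (L.map fun x => (f x.1, x.2)) :=
  List.isChain_map_of_isChain _ (fun _ _ hab heq => hab (hf heq)) h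

section LetterCount

variable [DecidableEq α]

lemma sum_count_mul_eq_sum_map [Fintype α] (l : List α) (c : α → ℕ) :
    ∑ i, l.count i * c i = (l.map c).sum := by
  induction l with
  | nil => simp
  | cons a l ih => simp [List.count_cons, add_mul, Finset.sum_add_distrib, ih, add_comm]

def letterCount (i : α) (w : FreeGroup α) : ℕ := (w.toWord.map Prod.fst).count i

lemma sum_letterCount [Fintype α] (w : FreeGroup α) : ∑ i, letterCount i w = w.norm := by
  simpa [letterCount, norm, Function.comp_def, List.map_const'] using
    sum_count_mul_eq_sum_map (w.toWord.map Prod.fst) fun _ => 1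

variable [DecidableEq β]

lemma norm_map_le_sum_letterCount_mul [Fintype α] (φ : FreeGroup α →* FreeGroup β)
    (w : FreeGroup α) : (φ w).norm ≤ ∑ i, letterCount i w * (φ (of i)).norm := by
  calc (φ w).norm = (φ (mk w.toWord)).norm := by rw [mk_toWord]
    _ ≤ (w.toWord.map fun x => (φ (of x.1)).norm).sum := norm_mk_le_sum_norm_of φ _
    _ = ∑ i, letterCount i w * (φ (of i)).norm := by
      unfold letterCount
      rw [sum_count_mul_eq_sum_map, List.map_map]
      rfl

lemma toWord_map {f : α → β} (hf : Injective f) (w : FreeGroup α) :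
    (map f w).toWord = w.toWord.map fun x => (f x.1, x.2) := by
  conv_lhs => rw [← mk_toWord (x := w)]
  rw [map.mk, toWord_mk, (isReduced_toWord.map hf).reduce_eq]

lemma norm_map {f : α → β} (hf : Injective f) (w : FreeGroup α) : (map f w).norm = w.norm := by
  simp [norm, toWord_map hf]

lemma letterCount_map {f : α → β} (hf : Injective f) (i : α) (w : FreeGroup α) :
    letterCount (f i) (map f w) = letterCount i w := by
  rw [letterCount, letterCount, toWord_map hf, List.map_map,
    show Prod.fst ∘ (fun x : α × Bool => (f x.1, x.2)) = f ∘ Prod.fst from rfl, ← List.map_map]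
  exact List.count_map_of_injective _ f hf i

end LetterCount

section Sphere

abbrev sphere (α : Type*) [DecidableEq α] (n : ℕ) := {w : FreeGroup α // w.norm = n}

variable [DecidableEq α]

lemma sum_sphere_letterCount_eq (n : ℕ) [Fintype (sphere α n)] (i j : α) :
    ∑ w : sphere α n, letterCount i w.1 = ∑ w : sphere α n, letterCount j w.1 := by
  let e := Equiv.swap i j
  refine Fintype.sum_equiv ((freeGroupCongr e).toEquiv.subtypeEquiv fun w => ?_) _ _ fun w => ?_
  · exact (norm_map e.injective w).symm ▸ Iff.rfl
  · rw [← letterCount_map e.injective i w.1, Equiv.swap_apply_left]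
    rfl

lemma card_mul_sum_sphere_letterCount [Fintype α] (n : ℕ) [Fintype (sphere α n)] (i : α) :
    Fintype.card α * ∑ w : sphere α n, letterCount i w.1 = n * Fintype.card (sphere α n) := by
  calc Fintype.card α * ∑ w : sphere α n, letterCount i w.1
      = ∑ j : α, ∑ w : sphere α n, letterCount j w.1 := by
        simp [sum_sphere_letterCount_eq n _ i]
    _ = ∑ w : sphere α n, ∑ j, letterCount j w.1 := Finset.sum_comm
    _ = ∑ _w : sphere α n, n := Finset.sum_congr rfl fun w _ => (sum_letterCount w.1).trans w.2
    _ = n * Fintype.card (sphere α n) := by simp [mul_comm]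

lemma card_mul_sum_sphere_norm_map_le [DecidableEq β] [Fintype α]
    (φ : FreeGroup α →* FreeGroup β) (n : ℕ) [Fintype (sphere α n)] :
    Fintype.card α * ∑ w : sphere α n, (φ w).norm ≤
      n * Fintype.card (sphere α n) * ∑ i, (φ (of i)).norm := by
  calc Fintype.card α * ∑ w : sphere α n, (φ w).norm
      ≤ Fintype.card α * ∑ w : sphere α n, ∑ i, letterCount i w.1 * (φ (of i)).norm := by
        gcongr with w
        exact norm_map_le_sum_letterCount_mul φ w
    _ = ∑ i, (Fintype.card α * ∑ w : sphere α n, letterCount i w.1) * (φ (of i)).norm := by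
        rw [Finset.sum_comm, Finset.mul_sum]
        simp [Finset.sum_mul, mul_assoc]
    _ = n * Fintype.card (sphere α n) * ∑ i, (φ (of i)).norm := by
        simp_rw [card_mul_sum_sphere_letterCount, ← Finset.mul_sum]

end Sphere

section Counting

abbrev ReducedWord (α : Type*) (n : ℕ) := {L : List (α × Bool) // L.length = n ∧ IsReduced L}

instance [Finite α] (n : ℕ) : Finite (ReducedWord α n) :=
  Set.Finite.to_subtype ((List.finite_length_eq (α × Bool) n).subset fun _ h => h.1)

lemma card_reducedWord_one_le [Fintype α] : Nat.card (ReducedWord α 1) ≤ 2 * Fintype.card α := by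
  have hsurj : Surjective fun x : α × Bool => (⟨[x], rfl, .singleton⟩ : ReducedWord α 1) := by
    rintro ⟨L, hlen, -⟩
    obtain ⟨x, rfl⟩ := List.length_eq_one_iff.mp hlen
    exact ⟨x, rfl⟩
  simpa [mul_comm] using Nat.card_le_card_of_surjective _ hsurj

lemma card_cons_cons_isReduced_le [Fintype α] (y : α × Bool) (L : List (α × Bool)) :
    Nat.card {x : α × Bool // IsReduced (x :: y :: L)} ≤ 2 * Fintype.card α - 1 := by
  classical
  have hcancel : ∀ x : α × Bool, IsReduced (x :: y :: L) → x ≠ (y.1, !y.2) := by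
    rintro x hx rfl
    simp at hx
  calc Nat.card {x : α × Bool // IsReduced (x :: y :: L)}
      ≤ Nat.card {x : α × Bool // x ≠ (y.1, !y.2)} :=
        Nat.card_le_card_of_injective _ (Subtype.impEmbedding _ _ hcancel).injective
    _ = 2 * Fintype.card α - 1 := by
        rw [Nat.card_eq_fintype_card, Fintype.card_subtype_compl, Fintype.card_subtype_eq]
        simp [mul_comm]

lemma card_reducedWord_succ_succ_le [Fintype α] (k : ℕ) :
    Nat.card (ReducedWord α (k + 2)) ≤
      Nat.card (ReducedWord α (k + 1)) * (2 * Fintype.card α - 1) := by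
  have := Fintype.ofFinite (ReducedWord α (k + 1))
  let cons (p : Σ L : ReducedWord α (k + 1), {x : α × Bool // IsReduced (x :: L.1)}) :
      ReducedWord α (k + 2) := ⟨p.2.1 :: p.1.1, by simp [p.1.2.1], p.2.2⟩
  have hcons : Surjective cons := by
    rintro ⟨_ | ⟨x, L⟩, hlen, hred⟩
    · simp at hlen
    · exact ⟨⟨⟨L, by simpa using hlen, hred.tail⟩, ⟨x, hred⟩⟩, rfl⟩
  calc Nat.card (ReducedWord α (k + 2))
      ≤ Nat.card (Σ L : ReducedWord α (k + 1), {x : α × Bool // IsReduced (x :: L.1)}) :=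
        Nat.card_le_card_of_surjective cons hcons
    _ = ∑ L : ReducedWord α (k + 1), Nat.card {x : α × Bool // IsReduced (x :: L.1)} :=
        Nat.card_sigma
    _ ≤ ∑ _L : ReducedWord α (k + 1), (2 * Fintype.card α - 1) := by
        refine Finset.sum_le_sum fun ⟨L, hlen, _⟩ _ => ?_
        obtain ⟨y, L, rfl⟩ := List.exists_cons_of_length_eq_add_one hlen
        exact card_cons_cons_isReduced_le y L
    _ = Nat.card (ReducedWord α (k + 1)) * (2 * Fintype.card α - 1) := by
        simp [Nat.card_eq_fintype_card]

lemma card_reducedWord_succ_le [Fintype α] (n : ℕ) :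
    Nat.card (ReducedWord α (n + 1)) ≤ 2 * Fintype.card α * (2 * Fintype.card α - 1) ^ n := by
  induction n with
  | zero => simpa using card_reducedWord_one_le
  | succ k ih =>
    calc Nat.card (ReducedWord α (k + 2))
        ≤ Nat.card (ReducedWord α (k + 1)) * (2 * Fintype.card α - 1) :=
          card_reducedWord_succ_succ_le k
      _ ≤ 2 * Fintype.card α * (2 * Fintype.card α - 1) ^ k * (2 * Fintype.card α - 1) := by
          gcongr
      _ = 2 * Fintype.card α * (2 * Fintype.card α - 1) ^ (k + 1) := by ring

variable [DecidableEq α]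

def sphere.toReducedWord {n : ℕ} (w : sphere α n) : ReducedWord α n :=
  ⟨w.1.toWord, w.2, isReduced_toWord⟩

lemma sphere.toReducedWord_injective (n : ℕ) :
    Injective (sphere.toReducedWord (α := α) (n := n)) :=
  fun _ _ h => Subtype.ext (toWord_injective (congrArg Subtype.val h))

instance [Finite α] (n : ℕ) : Finite (sphere α n) :=
  Finite.of_injective _ (sphere.toReducedWord_injective n)

lemma card_sphere_succ_le [Fintype α] (n : ℕ) :
    Nat.card (sphere α (n + 1)) ≤ 2 * Fintype.card α * (2 * Fintype.card α - 1) ^ n :=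
  (Nat.card_le_card_of_injective _ (sphere.toReducedWord_injective _)).trans
    (card_reducedWord_succ_le n)

end Counting

lemma sum_norm_of_le_of_transvection [Fintype α] [DecidableEq α] {m : ℕ} {a b : α}
    (φ : FreeGroup α →* FreeGroup α) (ha : φ (of a) = of a * of b ^ m)
    (hi : ∀ i, i ≠ a → φ (of i) = of i) :
    ∑ i, (φ (of i)).norm ≤ Fintype.card α + m := by
  have hle : ∀ i, (φ (of i)).norm ≤ 1 + if i = a then m else 0 := by
    intro i
    by_cases h : i = a
    · subst h
      simpa [ha, norm_of, norm_of_pow] using norm_mul_le (of i) (of b ^ m)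
    · simp [hi i h, h, norm_of]
  calc ∑ i, (φ (of i)).norm ≤ ∑ i, (1 + if i = a then m else 0) :=
        Finset.sum_le_sum fun i _ => hle i
    _ = Fintype.card α + m := by simp [Finset.sum_add_distrib]

end FreeGroup

open FreeGroup

lemma cyclen_le_wlen {N : ℕ} (w : FreeGroup (Fin N)) : cyclen w ≤ wlen w :=
  Nat.sInf_le ⟨1, by simp⟩

lemma avg_nonneg (N : ℕ) (φ : FreeGroup (Fin N) → FreeGroup (Fin N)) (n : ℕ) : 0 ≤ avg N φ n :=
  div_nonneg (tsum_nonneg fun _ => Nat.cast_nonneg _) (by positivity)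

lemma avg_le {N : ℕ} (hN : 0 < N) (φ : FreeGroup (Fin N) →* FreeGroup (Fin N)) (n : ℕ) :
    avg N φ n ≤ (∑ i, (φ (of i)).norm : ℕ) / (N : ℝ) := by
  obtain _ | n := n
  · simpa [avg] using by positivity
  set C := ∑ i, (φ (of i)).norm
  have := Fintype.ofFinite (sphere (Fin N) (n + 1))
  have hcard : Fintype.card (sphere (Fin N) (n + 1)) ≤ 2 * N * (2 * N - 1) ^ n := by
    simpa [Nat.card_eq_fintype_card] using card_sphere_succ_le (α := Fin N) n
  have hsum : (∑ w : sphere (Fin N) (n + 1), cyclen (φ w.1)) * N ≤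
      C * ((n + 1) * (2 * N * (2 * N - 1) ^ n)) :=
    calc (∑ w : sphere (Fin N) (n + 1), cyclen (φ w.1)) * N
        ≤ N * ∑ w : sphere (Fin N) (n + 1), (φ w.1).norm := by
          rw [mul_comm]
          gcongr with w
          exact cyclen_le_wlen _
      _ ≤ (n + 1) * Fintype.card (sphere (Fin N) (n + 1)) * C := by
          simpa using card_mul_sum_sphere_norm_map_le φ (n + 1)
      _ ≤ C * ((n + 1) * (2 * N * (2 * N - 1) ^ n)) := by
          rw [mul_comm]
          gcongr
  have hD : 0 < 2 * N * (2 * N - 1) ^ n := by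
    have : 0 < 2 * N - 1 := by omega
    positivity
  change (∑' w : sphere (Fin N) (n + 1), (cyclen (φ w.1) : ℝ)) /
    ((n + 1 : ℕ) * ((2 * N * (2 * N - 1) ^ n : ℕ) : ℝ)) ≤ _
  rw [tsum_fintype, div_le_div_iff₀ (by positivity) (by positivity)]
  exact_mod_cast hsum

lemma limsup_avg_le {N : ℕ} (hN : 0 < N) (φ : FreeGroup (Fin N) →* FreeGroup (Fin N)) :
    limsup (avg N φ) atTop ≤ (∑ i, (φ (of i)).norm : ℕ) / (N : ℝ) :=
  limsup_le_of_le (isCoboundedUnder_le_of_le atTop (avg_nonneg N φ))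
    (Eventually.of_forall (avg_le hN φ))

/-- for every `N ≥ 2` and `m ≥ 1`, the generic stretching factor of
`φ_{N,m}` (given by `a₁ ↦ a₁a₂^m`, `aᵢ ↦ aᵢ` for `i ≥ 2`) satisfies
`λ_A(φ_{N,m}) = limsup_n avg_n(φ_{N,m}) ≤ 1 + m/N = (N+m)/N`. -/
theorem stmt12 (N m : ℕ) (hN : 2 ≤ N)
    (φ : FreeGroup (Fin N) →* FreeGroup (Fin N))
    (hφ1 : φ (FreeGroup.of ⟨0, by omega⟩) =
      FreeGroup.of ⟨0, by omega⟩ * FreeGroup.of ⟨1, by omega⟩ ^ m)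
    (hφ2 : ∀ i : Fin N, i ≠ ⟨0, by omega⟩ → φ (FreeGroup.of i) = FreeGroup.of i) :
    Filter.limsup (avg N (fun w => φ w)) Filter.atTop ≤ ((N : ℝ) + m) / N := by
  have hsum : ∑ i, (φ (of i)).norm ≤ N + m := by
    simpa using sum_norm_of_le_of_transvection φ hφ1 hφ2
  refine (limsup_avg_le (by omega) φ).trans ?_
  gcongr
  exact_mod_cast hsum
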